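/- Let a, b be positive integers with a < b and gcd(a,b) = 1, let q = b div a, and let A : ℤ² → ℤ² be the linear map A(x,y) = (x, q·x + y). Then C_{a,b} = A(S_{a, b mod a}) and S_{a,b} = (A(S_{a, b mod a}) + {(0,0), (0,−1), …, (0,−q+1)}) ∪ (A(C_{a, b mod a}) + {(0,−q)}), where + denotes Minkowski sum of subsets of ℤ². -/

import Mathlib

/-- Membership of a lattice point `z` in the half-plane
`H^σ_{a,b,r} = {x ∈ ℝ² : 0 ≤ σ·((b/a)·x₁ − x₂ + r)}`. -/
def inH (a b σ : ℤ) (r : ℝ) (z : ℤ × ℤ) : Prop :=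
  0 ≤ (σ : ℝ) * ((b : ℝ) / (a : ℝ) * (z.1 : ℝ) - (z.2 : ℝ) + r)

/-- The staircase `S^σ_{a,b,r}`. -/
def stair (a b σ : ℤ) (r : ℝ) : Set (ℤ × ℤ) :=
  {z | inH a b σ r z ∧
    (¬ inH a b σ r (z.1 - σ, z.2) ∨ ¬ inH a b σ r (z.1, z.2 + σ))}

/-- The set of corners `C^σ_{a,b,r}`. -/
def corner (a b σ : ℤ) (r : ℝ) : Set (ℤ × ℤ) :=
  {z | inH a b σ r z ∧
    (¬ inH a b σ r (z.1 - σ, z.2) ∧ ¬ inH a b σ r (z.1, z.2 + σ))}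

/-- The column `col_x(A)` of a set `A ⊆ ℤ²`. -/
def col (x : ℤ) (A : Set (ℤ × ℤ)) : Set (ℤ × ℤ) := {p ∈ A | p.1 = x}

/-!
For `a > 0` the lattice points of `H_{a,b}` in column `x` are those with
`y ≤ f_b(x) := ⌊b x / a⌋`.
So in column `x` the staircase `S_{a,b}` is `f_b(x - 1) < y ≤ f_b(x)` together with `y = f_b(x)`,
and its corner, if any, is `(x, f_b(x))`, present exactly when `f_b(x - 1) < f_b(x)`.
With `b = q a + r` we get `f_b(x) = q x + f_r(x)`, and `f_r` grows by `0` or `1` from one column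
to the next since `0 ≤ r < a`. Hence `S_{a,r}` has the single point `(x, f_r(x))` in column `x`,
which `A` moves to `(x, f_b(x))`; as `q ≥ 1` this is a corner of `S_{a,b}`, and below it `S_{a,b}`
has `q - 1` more points, or `q` when `(x, f_r(x))` is a corner of `S_{a,r}`.
-/

open Pointwise in
theorem Set.mem_add_iff_exists_sub_mem {G : Type*} [AddGroup G] {s t : Set G} {p : G} :
    p ∈ s + t ↔ ∃ w ∈ t, p - w ∈ s := by
  simp only [Set.mem_add, ← eq_sub_iff_add_eq]
  constructor
  · rintro ⟨v, hv, w, hw, rfl⟩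
    exact ⟨w, hw, hv⟩
  · rintro ⟨w, hw, hv⟩
    exact ⟨p - w, hv, w, hw, rfl⟩

theorem mem_image_shear_iff (q : ℤ) (s : Set (ℤ × ℤ)) (x y : ℤ) :
    (x, y) ∈ (fun z : ℤ × ℤ => (z.1, q * z.1 + z.2)) '' s ↔ (x, y - q * x) ∈ s := by
  constructor
  · rintro ⟨⟨x', y'⟩, hs, he⟩
    simp only [Prod.mk.injEq] at he
    obtain ⟨rfl, rfl⟩ := he
    simpa using hs
  · intro hs
    exact ⟨_, hs, by simp⟩

namespace Int

variable {a b : ℤ}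

theorem mul_ediv_eq_ediv_mul_add (ha : a ≠ 0) (x : ℤ) :
    b * x / a = b / a * x + b % a * x / a := by
  conv_lhs => rw [← mul_ediv_add_emod b a]
  rw [show (a * (b / a) + b % a) * x = b % a * x + b / a * x * a by ring,
    add_mul_ediv_right _ _ ha, add_comm]

theorem mul_sub_one_ediv_le (ha : 0 < a) (hb : 0 ≤ b) (x : ℤ) : b * (x - 1) / a ≤ b * x / a :=
  Int.ediv_le_ediv ha (by linarith)

theorem mul_sub_one_ediv_add_one_le (ha : 0 < a) (hab : a ≤ b) (x : ℤ) :
    b * (x - 1) / a + 1 ≤ b * x / a :=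
  calc b * (x - 1) / a + 1 = (b * (x - 1) + 1 * a) / a := (add_mul_ediv_right _ _ ha.ne').symm
    _ ≤ b * x / a := Int.ediv_le_ediv ha (by linarith)

theorem mul_ediv_le_mul_sub_one_ediv_add_one (ha : 0 < a) (hba : b ≤ a) (x : ℤ) :
    b * x / a ≤ b * (x - 1) / a + 1 :=
  calc b * x / a ≤ (b * (x - 1) + 1 * a) / a := Int.ediv_le_ediv ha (by linarith)
    _ = b * (x - 1) / a + 1 := add_mul_ediv_right _ _ ha.ne'

end Int

namespace Staircase

variable {a b : ℤ}

theorem inH_one_zero_iff (ha : 0 < a) (z : ℤ × ℤ) : inH a b 1 0 z ↔ z.2 ≤ b * z.1 / a := by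
  have ha' : (0 : ℝ) < a := by exact_mod_cast ha
  rw [Int.le_ediv_iff_mul_le ha, inH, Int.cast_one, one_mul, add_zero, sub_nonneg,
    div_mul_eq_mul_div, le_div_iff₀ ha']
  exact_mod_cast Iff.rfl

theorem mem_stair_iff (ha : 0 < a) (x y : ℤ) :
    (x, y) ∈ stair a b 1 0 ↔
      y ≤ b * x / a ∧ (b * (x - 1) / a < y ∨ b * x / a < y + 1) := by
  simp only [stair, Set.mem_ofPred_eq, inH_one_zero_iff ha, not_le]

theorem mem_corner_iff (ha : 0 < a) (x y : ℤ) :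
    (x, y) ∈ corner a b 1 0 ↔ y = b * x / a ∧ b * (x - 1) / a < y := by
  simp only [corner, Set.mem_ofPred_eq, inH_one_zero_iff ha, not_le]
  omega

theorem mem_corner_iff_of_le (ha : 0 < a) (hab : a ≤ b) (x y : ℤ) :
    (x, y) ∈ corner a b 1 0 ↔ y = b * x / a := by
  have := Int.mul_sub_one_ediv_add_one_le ha hab x
  rw [mem_corner_iff ha]
  omega

theorem mem_stair_iff_of_le (ha : 0 < a) (hba : b ≤ a) (x y : ℤ) :
    (x, y) ∈ stair a b 1 0 ↔ y = b * x / a := by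
  have := Int.mul_ediv_le_mul_sub_one_ediv_add_one ha hba x
  rw [mem_stair_iff ha]
  omega

end Staircase

open Staircase

open Pointwise in
theorem stmt11_general (a b : ℤ) (ha : 0 < a) (hab : a < b) :
    corner a b 1 0 =
      (fun z : ℤ × ℤ => (z.1, b / a * z.1 + z.2)) '' stair a (b % a) 1 0 ∧
    stair a b 1 0 =
      ((fun z : ℤ × ℤ => (z.1, b / a * z.1 + z.2)) '' stair a (b % a) 1 0 +
        {w : ℤ × ℤ | w.1 = 0 ∧ -(b / a) + 1 ≤ w.2 ∧ w.2 ≤ 0}) ∪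
      ((fun z : ℤ × ℤ => (z.1, b / a * z.1 + z.2)) '' corner a (b % a) 1 0 +
        ({((0 : ℤ), -(b / a))} : Set (ℤ × ℤ))) := by
  have hr : b % a ≤ a := (Int.emod_lt_of_pos b ha).le
  have hsplit := Int.mul_ediv_eq_ediv_mul_add (b := b) ha.ne'
  constructor
  · ext ⟨x, y⟩
    rw [mem_corner_iff_of_le ha hab.le, mem_image_shear_iff, mem_stair_iff_of_le ha hr, hsplit]
    omega
  · ext ⟨x, y⟩
    have hmono := Int.mul_sub_one_ediv_le ha (Int.emod_nonneg b ha.ne') x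
    have hstep := Int.mul_ediv_le_mul_sub_one_ediv_add_one ha hr x
    have hq : 1 ≤ b / a := (Int.le_ediv_iff_mul_le ha).2 (by omega)
    simp only [Set.mem_union, Set.mem_add_iff_exists_sub_mem, Set.mem_singleton_iff,
      Set.mem_ofPred_eq, Prod.exists, Prod.mk_sub_mk, exists_and_left, exists_eq_left, and_assoc,
      sub_zero, mem_image_shear_iff, mem_stair_iff_of_le ha hr, mem_corner_iff ha,
      mem_stair_iff ha, hsplit, mul_sub_one (b / a) x]
    constructor
    · intro h
      by_cases hy : b / a * x + b % a * x / a - b / a + 1 ≤ y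
      · exact Or.inl ⟨y - b / a * x - b % a * x / a, by omega, by omega, by omega⟩
      · exact Or.inr (by omega)
    · rintro (⟨k, hk⟩ | h) <;> omega

open Pointwise in
theorem stmt11 (a b : ℤ) (ha : 0 < a) (hab : a < b) (hg : Int.gcd a b = 1) :
    corner a b 1 0 =
      (fun z : ℤ × ℤ => (z.1, b / a * z.1 + z.2)) '' stair a (b % a) 1 0 ∧
    stair a b 1 0 =
      ((fun z : ℤ × ℤ => (z.1, b / a * z.1 + z.2)) '' stair a (b % a) 1 0 +
        {w : ℤ × ℤ | w.1 = 0 ∧ -(b / a) + 1 ≤ w.2 ∧ w.2 ≤ 0}) ∪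
      ((fun z : ℤ × ℤ => (z.1, b / a * z.1 + z.2)) '' corner a (b % a) 1 0 +
        ({((0 : ℤ), -(b / a))} : Set (ℤ × ℤ))) :=
  stmt11_general a b ha hab
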